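/- arXiv:1704.00055 — 3 statements merged into one kernel-verified Lean document; each statement's English description precedes it below -/
import Mathlib

section
/- If w_n(ζ) < ∞ and N ≥ ⌈w_n(ζ)⌉ + 2n − 1, then λ_N(ζ) ≤ 1/n. Formally: given real sequences (w_n), (ŵ_n), (λ_N) satisfying ŵ_n ≥ n for all n and λ_N ≤ max{1/ŵ_n, 1/(ŵ_{N−n+1} − w_n)} for all N ≥ ⌈w_n⌉ + n − 1, deduce λ_N ≤ 1/n for all N ≥ ⌈w_n⌉ + 2n − 1. -/
/-- If `w n < ∞` and `N ≥ ⌈w n⌉ + 2n − 1`, then `λ N ≤ 1/n`,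
given Dirichlet's bound `ŵ n ≥ n` and the transference inequality
`λ N ≤ max (1/ŵ n) (1/(ŵ (N−n+1) − w n))` for `N ≥ ⌈w n⌉ + n − 1`. -/
theorem stmt_0 (w wh lam : ℕ → ℝ)
    (hDir : ∀ n : ℕ, 1 ≤ n → (n : ℝ) ≤ wh n)
    (hTrans : ∀ n N : ℕ, 1 ≤ n → (⌈w n⌉ + (n : ℤ) - 1 ≤ (N : ℤ)) →
      lam N ≤ max (1 / wh n) (1 / (wh (N - n + 1) - w n)))
    (n N : ℕ) (hn : 1 ≤ n) (hN : ⌈w n⌉ + 2 * (n : ℤ) - 1 ≤ (N : ℤ)) :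
    lam N ≤ 1 / n := by
  have hn' : (0:ℝ) < n := by exact_mod_cast hn
  have h1 : lam N ≤ max (1 / wh n) (1 / (wh (N - n + 1) - w n)) :=
    hTrans n N hn (by omega)
  have hA : 1 / wh n ≤ 1 / n :=
    one_div_le_one_div_of_le hn' (hDir n hn)
  have hm1 : 1 ≤ N - n + 1 := by omega
  have hwm : ((N - n + 1 : ℕ):ℝ) ≤ wh (N - n + 1) := hDir _ hm1
  have hw : w n ≤ ⌈w n⌉ := Int.le_ceil _
  have hkey : (n:ℝ) ≤ wh (N - n + 1) - w n := by
    rcases le_or_gt n N with h | h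
    · have h2 : ⌈w n⌉ + (n:ℤ) ≤ ((N - n + 1 : ℕ):ℤ) := by omega
      have h3 : (⌈w n⌉:ℝ) + n ≤ ((N - n + 1 : ℕ):ℝ) := by exact_mod_cast h2
      linarith
    · have hc : ⌈w n⌉ ≤ -(n:ℤ) := by omega
      have hc' : (⌈w n⌉:ℝ) ≤ -(n:ℝ) := by exact_mod_cast hc
      have hm : N - n + 1 = 1 := by omega
      rw [hm] at hwm
      push_cast at hwm
      rw [hm]
      linarith
  have hB : 1 / (wh (N - n + 1) - w n) ≤ 1 / n :=
    one_div_le_one_div_of_le hn' hkey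
  exact h1.trans (max_le hA hB)
end

section
/- Suppose ŵ_n ≥ n and w_n < n + 1 imply λ_{2n} ≤ 1/ŵ_n ≤ 1/n, and suppose λ̂_{2n} ≤ max{1/w_n, 1/ŵ_{n+1}}. If moreover λ̂_{2n} ≤ −A/2 + sqrt((A/2)² + (2n−1)λ_{2n}) with A = 2n−2+(2n−1)λ_{2n}, then λ̂_{2n} ≤ sqrt((n + 1/(2n))² − 1/n) − n + 1/(2n). -/
set_option maxHeartbeats 1000000 in
/-- algebraic core of Theorem 4.6 (eq:tropf). -/
theorem stmt_6 (n : ℕ) (hn : 1 ≤ n) (w wh whn1 lam2n lamh : ℝ)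
    (hwh : (n : ℝ) ≤ wh)
    (hwhn1 : (n : ℝ) + 1 ≤ whn1)
    (hdir : 1 / (2 * (n : ℝ)) ≤ lam2n)
    (hvor3 : w < (n : ℝ) + 1 → lam2n ≤ 1 / wh ∧ 1 / wh ≤ 1 / (n : ℝ))
    (hribiza : lamh ≤ max (1 / w) (1 / whn1))
    (hss : lamh ≤ -((2 * (n : ℝ) - 2 + (2 * n - 1) * lam2n) / 2) +
      Real.sqrt (((2 * (n : ℝ) - 2 + (2 * n - 1) * lam2n) / 2) ^ 2 +
        (2 * n - 1) * lam2n)) :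
    lamh ≤ Real.sqrt (((n : ℝ) + 1 / (2 * n)) ^ 2 - 1 / n) - n + 1 / (2 * n) := by
  have hN : (1:ℝ) ≤ (n:ℝ) := by exact_mod_cast hn
  have hN0 : (0:ℝ) < (n:ℝ) := by linarith
  set N : ℝ := (n:ℝ) with hNdef
  clear_value N
  clear hn hNdef
  -- a = 1/(2N)
  obtain ⟨a, hadef⟩ : ∃ u:ℝ, u = 1/(2*N) := ⟨_, rfl⟩
  rw [← hadef] at hdir ⊢
  have ha0 : (0:ℝ) < a := by rw [hadef]; positivity
  have hinv : a * (2*N) = 1 := by rw [hadef]; field_simp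
  have ha12 : a ≤ 1/2 := by nlinarith
  have h1N : 1/N = 2 * a := by rw [hadef]; field_simp
  rw [h1N] at hvor3 ⊢
  -- t = N - a
  obtain ⟨t, htdef⟩ : ∃ u:ℝ, u = N - a := ⟨_, rfl⟩
  have ht12 : (1:ℝ)/2 ≤ t := by rw [htdef]; linarith
  -- y
  obtain ⟨y, hydef⟩ : ∃ u:ℝ, u = t^2 + (2 - 2*a) := ⟨_, rfl⟩
  have hyt : t^2 ≤ y := by rw [hydef]; nlinarith
  have hy0 : (0:ℝ) ≤ y := le_trans (sq_nonneg t) hyt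
  have hsy : Real.sqrt y ^ 2 = y := Real.sq_sqrt hy0
  have hsyt : t ≤ Real.sqrt y := by
    have h := Real.sqrt_le_sqrt hyt
    rwa [Real.sqrt_sq (by linarith : (0:ℝ) ≤ t)] at h
  have hsyub : Real.sqrt y ≤ t + 1 := by
    have h1 : y ≤ (t+1)^2 := by rw [hydef]; nlinarith
    have h := Real.sqrt_le_sqrt h1
    rwa [Real.sqrt_sq (by linarith : (0:ℝ) ≤ t + 1)] at h
  have hyeq : (N + a)^2 - 2*a = y := by
    rw [hydef, htdef]; linear_combination (2:ℝ) * hinv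
  rw [hyeq]
  by_cases hw : w < N + 1
  · -- main case
    obtain ⟨h1, h2⟩ := hvor3 hw
    have hlam : lam2n ≤ 2 * a := h1.trans h2
    have hlam0 : 0 < lam2n := lt_of_lt_of_le ha0 hdir
    -- A and x
    obtain ⟨A, hAdef⟩ : ∃ u:ℝ, u = 2*N - 2 + (2*N-1)*lam2n := ⟨_, rfl⟩
    rw [← hAdef] at hss
    obtain ⟨x, hxdef⟩ : ∃ u:ℝ, u = (A/2)^2 + (2*N-1)*lam2n := ⟨_, rfl⟩
    rw [← hxdef] at hss
    have hA0 : 0 ≤ A := by rw [hAdef]; nlinarith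
    have hc0 : 0 ≤ t - A/2 := by
      have h3 : (0:ℝ) ≤ (2*N-1) * (2*a - lam2n) := by nlinarith
      have h4 : t - A/2 = (2*N-1) * (2*a - lam2n)/2 + (2*(a*N) - 1) := by
        rw [htdef, hAdef]; linear_combination (-2:ℝ) * hinv
      rw [h4]; linarith [hinv, h3]
    obtain ⟨c, hcdef⟩ : ∃ u:ℝ, u = t - A/2 := ⟨_, rfl⟩
    rw [← hcdef] at hc0
    have hct : c ≤ t := by rw [hcdef]; linarith
    have hid2 : y - x = c*(t + A/2) + 2*c := by
      rw [hydef, hxdef, hcdef, htdef, hAdef]; ring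
    have hkey : Real.sqrt x ≤ Real.sqrt y - c := by
      have hpos : 0 ≤ Real.sqrt y - c := by linarith
      have h2c : c * Real.sqrt y ≤ c * (t + 1) :=
        mul_le_mul_of_nonneg_left hsyub hc0
      have e7 : c*(A/2) + c^2 = c*t := by rw [hcdef]; ring
      have hx2 : x ≤ (Real.sqrt y - c)^2 := by
        have expand : (Real.sqrt y - c)^2 = y - 2*(c*Real.sqrt y) + c^2 := by
          rw [sub_sq, hsy]; ring
        rw [expand]
        linarith [hid2, h2c, e7]
      have h := Real.sqrt_le_sqrt hx2
      rwa [Real.sqrt_sq hpos] at h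
    have hend : Real.sqrt y - c - A/2 = Real.sqrt y - N + a := by
      rw [hcdef, htdef]; ring
    linarith [hkey, hss, hend.le, hend.ge]
  · -- easy case: w ≥ N + 1
    push_neg at hw
    have hN1 : (0:ℝ) < N + 1 := by linarith
    have hb1 : 1/w ≤ 1/(N+1) := one_div_le_one_div_of_le hN1 hw
    have hb2 : 1/whn1 ≤ 1/(N+1) := one_div_le_one_div_of_le hN1 hwhn1
    have hlamh : lamh ≤ 1/(N+1) := le_trans hribiza (max_le hb1 hb2)
    obtain ⟨b, hbdef⟩ : ∃ u:ℝ, u = 1/(N+1) := ⟨_, rfl⟩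
    rw [← hbdef] at hlamh
    have hb0 : (0:ℝ) < b := by rw [hbdef]; positivity
    have hbinv : b * (N+1) = 1 := by rw [hbdef]; field_simp
    have hb1' : b ≤ 1 := by nlinarith
    have hsq2 : (t + b)^2 ≤ y := by
      rw [hydef]
      have e2 : b*N = 1 - b := by linarith [hbinv]
      have e4 : a*(b*N) = a*(1-b) := by rw [e2]
      have e5 : b^2 ≤ b := by nlinarith
      have e6 : b*(a*(2*N)) = b*1 := by rw [hinv]
      rw [htdef]
      nlinarith [e2, e4, e5, e6]
    have h5 : t + b ≤ Real.sqrt y := by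
      have h := Real.sqrt_le_sqrt hsq2
      rwa [Real.sqrt_sq (by positivity : (0:ℝ) ≤ t + b)] at h
    linarith [htdef.le, htdef.ge, h5, hlamh]
end

section
/- Let C ≥ 1 be real and m, n positive integers with N = m + n. Then the lower bound formula (Cn − m)/(m + n(1 + C(n−1))) follows from the chain: ψ*_{N,m+1} ≤ (m + n(1−C))/((m+n)(1+nC)), ψ_{N,1} ≤ ((m+1)/n)·ψ*_{N,m+1}, and λ_N ≥ ((N+1)/N)/(1 + ψ_{N,1}) − 1. That is: for reals ψ*, ψ, λ satisfying ψ* ≤ (m+n(1−C))/((m+n)(1+nC)), ψ ≤ ((m+1)/n)·ψ*, and (1+λ)(1+ψ) = (N+1)/N with 1+ψ > 0, one has λ ≥ (Cn − m)/(m + n(1+C(n−1))). -/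
/-! Chaining the two estimates bounds `1 + ψ` by an explicit `U`, and the conversion formula
turns this into `λ ≥ ((N + 1)/N)/U - 1`. The closed form comes from the factorisation
`n(m + n)(1 + nC) · U = (m + n + 1)(m + n(1 + C(n - 1)))`. -/

lemma div_le_one_add_of_mul_eq {k x u l : ℝ} (hk : 0 ≤ k) (hx : 0 < x) (hxu : x ≤ u)
    (h : (1 + l) * x = k) : k / u ≤ 1 + l :=
  calc k / u ≤ k / x := div_le_div_of_nonneg_left hk hx hxu
    _ = 1 + l := (eq_div_of_mul_eq hx.ne' h).symm

lemma ratio_div_one_add_bound_sub_one {m n C : ℝ} (hm : 0 ≤ m) (hn : 1 ≤ n) (hC : 0 ≤ C) :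
    (m + n + 1) / (m + n) / (1 + (m + 1) / n * ((m + n * (1 - C)) / ((m + n) * (1 + n * C))))
      - 1 = (C * n - m) / (m + n * (1 + C * (n - 1))) := by
  have hD : 0 < m + n * (1 + C * (n - 1)) := by nlinarith [mul_nonneg hC (sub_nonneg.2 hn)]
  have hU : 1 + (m + 1) / n * ((m + n * (1 - C)) / ((m + n) * (1 + n * C)))
      = (m + n + 1) * (m + n * (1 + C * (n - 1))) / (n * (m + n) * (1 + n * C)) := by
    field_simp
    ring
  rw [hU]
  field_simp
  ring

theorem stmt_11_general (C : ℝ) (hC : 1 ≤ C) (m n N : ℕ) (hn : 1 ≤ n)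
    (hN : N = m + n)
    (ψstar ψ lam : ℝ)
    (h1 : ψstar ≤ ((m : ℝ) + n * (1 - C)) / (((m : ℝ) + n) * (1 + n * C)))
    (h2 : ψ ≤ (((m : ℝ) + 1) / n) * ψstar)
    (h3 : (1 + lam) * (1 + ψ) = ((N : ℝ) + 1) / N)
    (h4 : 0 < 1 + ψ) :
    (C * n - m) / (m + n * (1 + C * ((n : ℝ) - 1))) ≤ lam := by
  subst hN
  push_cast at h3
  have hψ : 1 + ψ ≤ 1 + (m + 1) / n * ((m + n * (1 - C)) / ((m + n) * (1 + n * C))) := by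
    grw [h2, h1]
  have hlam := div_le_one_add_of_mul_eq (by positivity) h4 hψ h3
  rw [← ratio_div_one_add_bound_sub_one m.cast_nonneg (by exact_mod_cast hn) (by linarith)]
  linarith

/-- the algebraic step (eq:hofa)–(eq:bratschi) in the proof of
Theorem 4.2, with `N = m + n`. -/
theorem stmt_11 (C : ℝ) (hC : 1 ≤ C) (m n N : ℕ) (hm : 1 ≤ m) (hn : 1 ≤ n)
    (hN : N = m + n) (hmC : (m : ℝ) < C * n)
    (ψstar ψ lam : ℝ)
    (h1 : ψstar ≤ ((m : ℝ) + n * (1 - C)) / (((m : ℝ) + n) * (1 + n * C)))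
    (h2 : ψ ≤ (((m : ℝ) + 1) / n) * ψstar)
    (h3 : (1 + lam) * (1 + ψ) = ((N : ℝ) + 1) / N)
    (h4 : 0 < 1 + ψ) :
    (C * n - m) / (m + n * (1 + C * ((n : ℝ) - 1))) ≤ lam :=
  stmt_11_general C hC m n N hn hN ψstar ψ lam h1 h2 h3 h4
end
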